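/- Let Γ be a group acting by isometries on a geodesic Gromov-hyperbolic metric space X, z_0 ∈ X, and μ a non-elementary probability measure on Γ. Then there is p ∈ ℕ such that the support of the p-fold convolution μ^{*p} contains a Schottky set. -/

import Mathlib

open MeasureTheory ProbabilityTheory Filter Topology Pointwise

noncomputable section

namespace BMS

/-- The Gromov product `(y,z)_x := (d(y,x) + d(z,x) - d(y,z))/2`. -/
def gp {X : Type*} [MetricSpace X] (x y z : X) : ℝ :=
  (dist y x + dist z x - dist y z) / 2

/-- `X` is `δ`-hyperbolic. -/
def HypWith (δ : ℝ) (X : Type*) [MetricSpace X] : Prop :=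
  ∀ x₀ x₁ x₂ x₃ : X, min (gp x₀ x₃ x₁) (gp x₀ x₃ x₂) - δ ≤ gp x₀ x₁ x₂

/-- `X` is Gromov-hyperbolic. -/
def GromovHyperbolic (X : Type*) [MetricSpace X] : Prop :=
  ∃ δ : ℝ, 0 < δ ∧ HypWith δ X

/-- `X` is a geodesic metric space: any two points are joined by an isometrically
parametrized path. -/
def GeodesicSpace (X : Type*) [MetricSpace X] : Prop :=
  ∀ x y : X, ∃ f : ℝ → X, f 0 = x ∧ f (dist x y) = y ∧
    ∀ s ∈ Set.Icc (0 : ℝ) (dist x y), ∀ t ∈ Set.Icc (0 : ℝ) (dist x y),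
      dist (f s) (f t) = |s - t|

/-- The action of `Γ` on `X` is by isometries. -/
def IsIsomAction (Γ X : Type*) [Group Γ] [MetricSpace X] [MulAction Γ X] : Prop :=
  ∀ (g : Γ) (x y : X), dist (g • x) (g • y) = dist x y

/-- The positions of the random walk: `walk ω n = ω 1 * ⋯ * ω n`. -/
def walk {Γ Ω : Type*} [Group Γ] (ω : ℕ → Ω → Γ) : ℕ → Ω → Γ
  | 0 => fun _ => 1
  | n + 1 => fun ρ => walk ω n ρ * ω (n + 1) ρ

/-- Extended-real valued logarithm of an extended nonnegative real, with `elog 0 = ⊥`. -/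
def elog (x : ENNReal) : EReal :=
  if x = 0 then ⊥ else ((Real.log x.toReal : ℝ) : EReal)

/-- `(1/n)·log P(Z n ∈ R)`, as an extended real number. -/
def logProbRate {Ω : Type*} [MeasurableSpace Ω] (P : Measure Ω) (Z : ℕ → Ω → ℝ)
    (R : Set ℝ) (n : ℕ) : EReal :=
  (((n : ℝ)⁻¹ : ℝ) : EReal) * elog (P {ρ | Z n ρ ∈ R})

/-- The sequence of real random variables `Z n` satisfies a (full) large deviation
principle under `P` with rate function `I`. -/
def HasLDP {Ω : Type*} [MeasurableSpace Ω] (P : Measure Ω) (Z : ℕ → Ω → ℝ)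
    (I : ℝ → ENNReal) : Prop :=
  LowerSemicontinuous I ∧
  ∀ R : Set ℝ, MeasurableSet R →
    (-(⨅ α ∈ interior R, ((I α : EReal))) ≤ liminf (logProbRate P Z R) atTop ∧
      limsup (logProbRate P Z R) atTop ≤ -(⨅ α ∈ closure R, ((I α : EReal))))

/-- Weak large deviation principle: the lower bound holds for all measurable sets and
the upper bound for bounded measurable sets. -/
def HasWeakLDP {Ω : Type*} [MeasurableSpace Ω] (P : Measure Ω) (Z : ℕ → Ω → ℝ)
    (I : ℝ → ENNReal) : Prop :=
  LowerSemicontinuous I ∧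
  ∀ R : Set ℝ, MeasurableSet R →
    (-(⨅ α ∈ interior R, ((I α : EReal))) ≤ liminf (logProbRate P Z R) atTop ∧
      (Bornology.IsBounded R →
        limsup (logProbRate P Z R) atTop ≤ -(⨅ α ∈ closure R, ((I α : EReal)))))

/-- Convexity of an `[0,∞]`-valued function on `ℝ`. -/
def ConvexRate (I : ℝ → ENNReal) : Prop :=
  ∀ x y t : ℝ, 0 ≤ t → t ≤ 1 →
    I (t * x + (1 - t) * y) ≤ ENNReal.ofReal t * I x + ENNReal.ofReal (1 - t) * I y

/-- A rate function is proper if its sublevel sets are compact. -/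
def ProperRate (I : ℝ → ENNReal) : Prop :=
  ∀ c : ENNReal, c ≠ ⊤ → IsCompact {x : ℝ | I x ≤ c}

/-- The support of a measure on a countable discrete space. -/
def measSupport {Γ : Type*} [MeasurableSpace Γ] (μ : Measure Γ) : Set Γ :=
  {g | μ {g} ≠ 0}

/-- `S` is a Schottky set with respect to the basepoint `z0`. -/
def IsSchottky {Γ X : Type*} [Group Γ] [MetricSpace X] [MulAction Γ X]
    (z0 : X) (S : Set Γ) : Prop :=
  S.Finite ∧ S.Nonempty ∧ ∃ C : ℝ, 0 < C ∧ ∀ y z : X,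
    (2 / 3 : ℝ) * (S.ncard : ℝ) ≤ (({s ∈ S | gp z0 y (s • z) ≤ C} : Set Γ).ncard : ℝ)

/-- `u : ℤ → X` is a quasi-geodesic. -/
def QuasiGeodZ {X : Type*} [MetricSpace X] (u : ℤ → X) : Prop :=
  ∃ lam C : ℝ, 1 ≤ lam ∧ 0 ≤ C ∧ ∀ m n : ℤ,
    lam⁻¹ * |(m : ℝ) - (n : ℝ)| - C ≤ dist (u m) (u n) ∧
      dist (u m) (u n) ≤ lam * |(m : ℝ) - (n : ℝ)| + C

/-- `g` is a loxodromic isometry: some (equivalently, any) orbit map `n ↦ g^n • x`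
is a quasi-geodesic. -/
def IsLoxodromic (X : Type*) {Γ : Type*} [MetricSpace X] [Group Γ] [MulAction Γ X]
    (g : Γ) : Prop :=
  ∃ x : X, QuasiGeodZ (fun n : ℤ => (g ^ n) • x)

/-- The forward (`s = true`) or backward (`s = false`) orbit ray of `g` from `z0`. -/
def raySeq {Γ X : Type*} [Group Γ] [MetricSpace X] [MulAction Γ X]
    (z0 : X) (g : Γ) (s : Bool) : ℕ → X :=
  fun n => (g ^ (if s then (n : ℤ) else -(n : ℤ))) • z0

/-- Two sequences define the same point of the Gromov boundary. -/
def SameEnd {X : Type*} [MetricSpace X] (z0 : X) (u v : ℕ → X) : Prop :=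
  Tendsto (fun n => gp z0 (u n) (v n)) atTop atTop

/-- `g` and `h` are independent loxodromic elements: both are loxodromic and their
four boundary fixed points are pairwise distinct. -/
def IndepLox {Γ X : Type*} [Group Γ] [MetricSpace X] [MulAction Γ X]
    (z0 : X) (g h : Γ) : Prop :=
  IsLoxodromic X g ∧ IsLoxodromic X h ∧
  (¬ SameEnd z0 (raySeq z0 g true) (raySeq z0 g false)) ∧
  (¬ SameEnd z0 (raySeq z0 h true) (raySeq z0 h false)) ∧
  (∀ s t : Bool, ¬ SameEnd z0 (raySeq z0 g s) (raySeq z0 h t))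

/-- A set `B` of isometries is non-elementary: the subsemigroup it generates contains
two independent loxodromic elements. -/
def NonElementarySet {Γ X : Type*} [Group Γ] [MetricSpace X] [MulAction Γ X]
    (z0 : X) (B : Set Γ) : Prop :=
  ∃ g h : Γ, g ∈ Subsemigroup.closure B ∧ h ∈ Subsemigroup.closure B ∧ IndepLox z0 g h

/-- A probability measure is non-elementary if its support is. -/
def NonElementary {Γ X : Type*} [Group Γ] [MeasurableSpace Γ] [MetricSpace X] [MulAction Γ X]
    (z0 : X) (μ : Measure Γ) : Prop :=
  NonElementarySet z0 (measSupport μ)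

/-- The translation length `τ(g) := inf_x d(x, g•x)`. -/
def translationLength (X : Type*) {Γ : Type*} [MetricSpace X] [Group Γ] [MulAction Γ X]
    (g : Γ) : ℝ :=
  ⨅ x : X, dist x (g • x)

/-- The asymptotic (stable) translation length `ℓ(g) = lim_n d(g^n • z0, z0)/n`;
by Fekete's subadditivity lemma the limit equals the infimum over `n ≥ 1`. -/
def stableLength {Γ X : Type*} [Group Γ] [MetricSpace X] [MulAction Γ X]
    (z0 : X) (g : Γ) : ℝ :=
  ⨅ n : ℕ, dist ((g ^ (n + 1)) • z0) z0 / (n + 1)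

/-- `B` is non-arithmetic: some power `B^n` contains two elements with different
asymptotic translation lengths. -/
def NonArithmetic {Γ X : Type*} [Group Γ] [MetricSpace X] [MulAction Γ X]
    (z0 : X) (B : Set Γ) : Prop :=
  ∃ (n : ℕ) (g₁ g₂ : Γ), g₁ ∈ B ^ n ∧ g₂ ∈ B ^ n ∧
    stableLength z0 g₁ ≠ stableLength z0 g₂

/-- `sup_{g ∈ B^n} d(g•z0, z0)`, valued in `[0,∞]`. -/
def dispSup {Γ X : Type*} [Group Γ] [MetricSpace X] [MulAction Γ X]
    (z0 : X) (B : Set Γ) (n : ℕ) : ENNReal :=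
  ⨆ g ∈ B ^ n, ENNReal.ofReal (dist (g • z0) z0)

/-- `inf_{g ∈ B^n} d(g•z0, z0)`, valued in `[0,∞]`. -/
def dispInf {Γ X : Type*} [Group Γ] [MetricSpace X] [MulAction Γ X]
    (z0 : X) (B : Set Γ) (n : ℕ) : ENNReal :=
  ⨅ g ∈ B ^ n, ENNReal.ofReal (dist (g • z0) z0)

/-- `μ` has a finite exponential moment:
`E[exp (λ·d(z0, ω 1 • z0))] < ∞` for some `λ > 0`. -/
def FiniteExpMoment {Γ Ω X : Type*} [Group Γ] [MetricSpace X] [MulAction Γ X]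
    [MeasurableSpace Ω] (P : Measure Ω) (ω : ℕ → Ω → Γ) (z0 : X) : Prop :=
  ∃ lam : ℝ, 0 < lam ∧
    Integrable (fun ρ => Real.exp (lam * dist ((ω 1 ρ) • z0) z0)) P

/-- The increments `ω i` are i.i.d. with common law `μ`. -/
def IIDWalk {Γ Ω : Type*} [Group Γ] [MeasurableSpace Γ] [MeasurableSpace Ω]
    (P : Measure Ω) (ω : ℕ → Ω → Γ) (μ : Measure Γ) : Prop :=
  (∀ i, Measurable (ω i)) ∧
  iIndepFun ω P ∧
  ∀ i, P.map (ω i) = μ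

/-- `-(1/n)·log P(d(z_n, z0) ≤ a·n)`. -/
def belowRate {Γ Ω X : Type*} [Group Γ] [MetricSpace X] [MulAction Γ X]
    [MeasurableSpace Ω] (P : Measure Ω) (ω : ℕ → Ω → Γ) (z0 : X) (a : ℝ) (n : ℕ) : EReal :=
  -((((n : ℝ)⁻¹ : ℝ) : EReal) * elog (P {ρ | dist ((walk ω n ρ) • z0) z0 ≤ a * n}))

/-- `-(1/n)·log P(d(z_n, z0) ≥ a·n)`. -/
def aboveRate {Γ Ω X : Type*} [Group Γ] [MetricSpace X] [MulAction Γ X]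
    [MeasurableSpace Ω] (P : Measure Ω) (ω : ℕ → Ω → Γ) (z0 : X) (a : ℝ) (n : ℕ) : EReal :=
  -((((n : ℝ)⁻¹ : ℝ) : EReal) * elog (P {ρ | a * n ≤ dist ((walk ω n ρ) • z0) z0}))

end BMS
namespace BMS

/-- Convolution of two measures on a group. -/
def mconv {Γ : Type*} [Monoid Γ] [MeasurableSpace Γ] (μ ν : Measure Γ) : Measure Γ :=
  (μ.prod ν).map fun p => p.1 * p.2

/-- `p`-fold convolution power `μ^{*p}` of a measure. -/
def convPow {Γ : Type*} [Monoid Γ] [MeasurableSpace Γ] (μ : Measure Γ) : ℕ → Measure Γ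
  | 0 => Measure.dirac 1
  | n + 1 => mconv (convPow μ n) μ


/-!
Let `a, b` be independent loxodromics in the semigroup generated by the support of `μ`. A power
of `a` whose forward and backward orbit points have small Gromov product at `z0` makes the orbit
of `z0` a chain with long pieces and small turns, so the ray `n ↦ a ^ n • z0` is aligned; the same
holds for the other three rays, and aligned rays with distinct endpoints eventually have bounded
Gromov product. Hence `A = a ^ (β n)` and `B = b ^ (α n)`, with exponents chosen so that both lie in
the same power of the support, play ping-pong for large `n`. The eight palindromic words of a
large length `m` in `A, B` whose first three letters encode `t : Fin 3 → Bool` are separated both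
forwards and backwards, and the four-point condition shows that for any `y, z` at most two of them
map `z` to a point with large Gromov product with `y`; since `6 ≥ 2/3 · 8`, they form a Schottky
set in the `m (α β n)`-th power of the support.
-/

section GromovProduct

variable {X : Type*} [MetricSpace X]

lemma gp_comm (x y z : X) : gp x y z = gp x z y := by
  unfold gp; rw [dist_comm y z]; ring

lemma gp_nonneg (x y z : X) : 0 ≤ gp x y z := by
  unfold gp; linarith [dist_triangle y x z, dist_comm x z]

lemma gp_self (x y : X) : gp x y y = dist x y := by
  unfold gp; rw [dist_self, dist_comm y x]; ring

lemma gp_self_left (x y : X) : gp x x y = 0 := by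
  unfold gp; rw [dist_self, dist_comm y x]; ring

lemma gp_add_gp (x y z : X) : gp x z y + gp y z x = dist x y := by
  unfold gp; rw [dist_comm y x]; ring

lemma dist_eq_add_sub_gp (x y z : X) : dist x z = dist x y + dist y z - 2 * gp y x z := by
  unfold gp; rw [dist_comm z y]; ring

lemma gp_le_dist_add_gp (x w y z : X) : gp x y z ≤ dist x w + gp w y z := by
  unfold gp; linarith [dist_triangle y w x, dist_triangle z w x, dist_comm w x]

lemma gp_le_gp_add_dist (x y y' z : X) : gp x y z ≤ gp x y' z + dist y y' := by
  unfold gp; linarith [dist_triangle y y' x, dist_triangle y' y z, dist_comm y y']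

lemma HypWith.min_sub_le {δ : ℝ} (hyp : HypWith δ X) (w x y z : X) :
    min (gp w x y) (gp w y z) - δ ≤ gp w x z := by
  simpa only [gp_comm w y x] using hyp w x z y

lemma HypWith.gp_le_of_gp_le {δ T : ℝ} (hyp : HypWith δ X) {w x y z : X}
    (hxy : gp w x y ≤ T) (hyz : T + δ < gp w y z) : gp w x z ≤ T + δ := by
  have := hyp.min_sub_le w x z y
  rw [gp_comm w z y] at this
  by_contra h
  have := lt_min (lt_of_not_ge h) hyz
  linarith

end GromovProduct

section IsometricAction

variable {X : Type*} [MetricSpace X] {Γ : Type*} [Group Γ] [MulAction Γ X] [IsIsometricSMul Γ X]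

lemma gp_smul (g : Γ) (x y z : X) : gp (g • x) (g • y) (g • z) = gp x y z := by
  simp only [gp, dist_smul]

lemma dist_inv_smul_self (g : Γ) (z : X) : dist z (g⁻¹ • z) = dist z (g • z) := by
  rw [← dist_smul g, smul_inv_smul, dist_comm]

lemma gp_smul_smul_self (g : Γ) (z0 z : X) :
    gp z0 (g • z) (g • z0) = dist z0 (g • z0) - gp z0 z (g⁻¹ • z0) := by
  have h₁ : gp z0 (g • z) (g • z0) = gp (g⁻¹ • z0) z z0 := by
    rw [← gp_smul g⁻¹, inv_smul_smul, inv_smul_smul]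
  have h₂ := gp_add_gp (g⁻¹ • z0) z0 z
  rw [dist_comm, dist_inv_smul_self] at h₂
  linarith

end IsometricAction

section Chain

variable {X : Type*} [MetricSpace X] {δ K : ℝ}

/-- A broken geodesic `x 0, …, x k` with long pieces and small turns; in a `δ`-hyperbolic space
such a chain is a quasi-geodesic (local-to-global principle). -/
structure IsChain (δ K : ℝ) (x : ℕ → X) (k : ℕ) : Prop where
  gp_le : ∀ i, i + 2 ≤ k → gp (x (i + 1)) (x i) (x (i + 2)) ≤ K
  le_dist : ∀ i, i + 1 ≤ k → 2 * K + 4 * δ + 1 ≤ dist (x i) (x (i + 1))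

namespace IsChain

variable {x : ℕ → X} {k : ℕ}

lemma shift (h : IsChain δ K x k) (j : ℕ) : IsChain δ K (fun i => x (j + i)) (k - j) where
  gp_le i hi := by simpa only [add_assoc] using h.gp_le (j + i) (by omega)
  le_dist i hi := by simpa only [add_assoc] using h.le_dist (j + i) (by omega)

lemma reverse (h : IsChain δ K x k) {j : ℕ} (hj : j ≤ k) :
    IsChain δ K (fun i => x (j - i)) j where
  gp_le i hi := by
    have e₁ : j - (i + 1) = j - i - 2 + 1 := by omega
    have e₂ : j - i = j - i - 2 + 2 := by omega
    have e₃ : j - (i + 2) = j - i - 2 := by omega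
    rw [e₁, e₂, e₃, gp_comm]
    exact h.gp_le _ (by omega)
  le_dist i hi := by
    have e₁ : j - i = j - i - 1 + 1 := by omega
    have e₂ : j - (i + 1) = j - i - 1 := by omega
    rw [e₁, e₂, dist_comm]
    exact h.le_dist _ (by omega)

lemma gp_one_zero_le (h : IsChain δ K x k) (hyp : HypWith δ X) (hδ : 0 ≤ δ) (hk : 2 ≤ k) :
    gp (x 1) (x 0) (x k) ≤ K + δ := by
  induction k generalizing x with
  | zero => omega
  | succ k ih =>
    rcases Nat.lt_or_ge k 2 with hk2 | hk2
    · obtain rfl : k = 1 := by omega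
      linarith [h.gp_le 0 le_rfl]
    have hnext : gp (x 2) (x 1) (x (k + 1)) ≤ K + δ := by
      simpa [add_comm 1 k] using ih (h.shift 1) (by omega)
    have hlong : K + δ < gp (x 1) (x 2) (x (k + 1)) := by
      have := gp_add_gp (x 1) (x 2) (x (k + 1))
      rw [gp_comm (x 2)] at this
      linarith [h.le_dist 1 (by omega), gp_comm (x 1) (x 2) (x (k + 1))]
    exact hyp.gp_le_of_gp_le (h.gp_le 0 (by omega)) (by linarith)

lemma le_gp_zero_one (h : IsChain δ K x k) (hyp : HypWith δ X) (hδ : 0 ≤ δ) (hK : 0 ≤ K)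
    (hk : 1 ≤ k) : K + 3 * δ + 1 ≤ gp (x 0) (x 1) (x k) := by
  rcases Nat.lt_or_ge k 2 with hk2 | hk2
  · obtain rfl : k = 1 := by omega
    rw [gp_self]
    linarith [h.le_dist 0 le_rfl]
  · have := gp_add_gp (x 0) (x 1) (x k)
    rw [gp_comm (x 0), gp_comm (x 1)] at this
    linarith [h.le_dist 0 (by omega), h.gp_one_zero_le hyp hδ hk2]

lemma gp_ends_le_of_fork {u v : ℕ → X} {k l : ℕ} (hu : IsChain δ K u k) (hv : IsChain δ K v l)
    (hyp : HypWith δ X) (hδ : 0 ≤ δ) (hK : 0 ≤ K) (hk : 1 ≤ k) (hl : 1 ≤ l) (h₀ : u 0 = v 0)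
    (hbranch : gp (u 0) (u 1) (v 1) ≤ K) :
    gp (u 0) (u k) (v l) ≤ K + 2 * δ := by
  have hv₁ := hv.le_gp_zero_one hyp hδ hK hl
  have hu₁ := hu.le_gp_zero_one hyp hδ hK hk
  rw [← h₀] at hv₁
  have h₁ : gp (u 0) (u 1) (v l) ≤ K + δ := hyp.gp_le_of_gp_le hbranch (by linarith)
  rw [gp_comm] at h₁ ⊢
  have := hyp.gp_le_of_gp_le h₁ (by linarith)
  linarith

lemma gp_interior_le (h : IsChain δ K x k) (hyp : HypWith δ X) (hδ : 0 ≤ δ) (hK : 0 ≤ K)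
    {j : ℕ} (hj : 1 ≤ j) (hjk : j ≤ k) : gp (x j) (x 0) (x k) ≤ K + 2 * δ := by
  rcases hjk.eq_or_lt with rfl | hjk
  · rw [gp_comm, gp_self_left]; linarith
  have hturn : gp (x j) (x (j - 1)) (x (j + 1)) ≤ K := by
    have := h.gp_le (j - 1) (by omega)
    rwa [Nat.sub_add_cancel hj, show j - 1 + 2 = j + 1 by omega] at this
  have := (h.reverse hjk.le).gp_ends_le_of_fork (h.shift j) hyp hδ hK hj (by omega) (by simp)
    (by simpa using hturn)
  simpa [Nat.add_sub_cancel' hjk.le] using this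

lemma dist_sub_le_gp (h : IsChain δ K x k) (hyp : HypWith δ X) (hδ : 0 ≤ δ) (hK : 0 ≤ K)
    {j : ℕ} (hjk : j ≤ k) : dist (x 0) (x j) - (K + 2 * δ) ≤ gp (x 0) (x j) (x k) := by
  rcases Nat.eq_zero_or_pos j with rfl | hj
  · rw [dist_self]; linarith [gp_nonneg (x 0) (x 0) (x k)]
  have := gp_add_gp (x 0) (x j) (x k)
  rw [gp_comm (x 0), gp_comm (x j)] at this
  linarith [h.gp_interior_le hyp hδ hK hj hjk]

lemma mul_le_dist (h : IsChain δ K x k) (hyp : HypWith δ X) (hδ : 0 ≤ δ) (hK : 0 ≤ K) :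
    (2 * δ + 1) * k ≤ dist (x 0) (x k) := by
  induction k generalizing x with
  | zero => simp
  | succ k ih =>
    have h₀₁ := h.le_dist 0 (by omega)
    rcases Nat.eq_zero_or_pos k with rfl | hk
    · simp only [zero_add] at h₀₁ ⊢; push_cast; linarith
    have h₁ : (2 * δ + 1) * k ≤ dist (x 1) (x (k + 1)) := by
      simpa [add_comm 1 k] using ih (h.shift 1)
    have := dist_eq_add_sub_gp (x 0) (x 1) (x (k + 1))
    push_cast
    linarith [h.gp_one_zero_le hyp hδ (show 2 ≤ k + 1 by omega)]

end IsChain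

end Chain

section Words

variable {Γ : Type*} [Group Γ]

/-- `wordProd c n = c 0 * c 1 * ⋯ * c (n - 1)`. -/
def wordProd (c : ℕ → Γ) : ℕ → Γ
  | 0 => 1
  | n + 1 => wordProd c n * c n

@[simp] lemma wordProd_zero (c : ℕ → Γ) : wordProd c 0 = 1 := rfl

lemma wordProd_succ (c : ℕ → Γ) (n : ℕ) : wordProd c (n + 1) = wordProd c n * c n := rfl

lemma wordProd_congr {c c' : ℕ → Γ} {n : ℕ} (h : ∀ s < n, c s = c' s) :
    wordProd c n = wordProd c' n := by
  induction n with
  | zero => rfl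
  | succ n ih =>
    rw [wordProd_succ, wordProd_succ, ih fun s hs => h s (by omega), h n (by omega)]

lemma wordProd_add (c : ℕ → Γ) (m n : ℕ) :
    wordProd c (m + n) = wordProd c m * wordProd (fun s => c (m + s)) n := by
  induction n with
  | zero => simp
  | succ n ih => rw [← add_assoc, wordProd_succ, ih, wordProd_succ, mul_assoc]

lemma wordProd_const (g : Γ) (n : ℕ) : wordProd (fun _ => g) n = g ^ n := by
  induction n with
  | zero => simp
  | succ n ih => rw [wordProd_succ, ih, pow_succ]

lemma inv_wordProd (c : ℕ → Γ) (n : ℕ) :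
    (wordProd c n)⁻¹ = wordProd (fun s => (c (n - 1 - s))⁻¹) n := by
  induction n with
  | zero => simp
  | succ n ih =>
    rw [wordProd_succ, mul_inv_rev, ih, add_comm n 1, wordProd_add]
    congr 1
    · simp [wordProd_succ]
    · exact wordProd_congr fun s _ => by congr 2; omega

lemma wordProd_mem_pow {B : Set Γ} {c : ℕ → Γ} (h : ∀ s, c s ∈ B) (n : ℕ) :
    wordProd c n ∈ B ^ n := by
  induction n with
  | zero => simp
  | succ n ih => exact pow_succ B n ▸ Set.mul_mem_mul ih (h n)

end Words

section WordChain

variable {X : Type*} [MetricSpace X] {Γ : Type*} [Group Γ] [MulAction Γ X]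
  [IsIsometricSMul Γ X] {δ K : ℝ} {z0 : X}

lemma isChain_wordProd {c : ℕ → Γ} (hturn : ∀ s, gp z0 ((c s)⁻¹ • z0) (c (s + 1) • z0) ≤ K)
    (hlong : ∀ s, 2 * K + 4 * δ + 1 ≤ dist z0 (c s • z0)) (k : ℕ) :
    IsChain δ K (fun i => wordProd c i • z0) k where
  gp_le i _ := by
    have e₁ : wordProd c i • z0 = wordProd c (i + 1) • ((c i)⁻¹ • z0) := by
      rw [smul_smul, wordProd_succ, mul_inv_cancel_right]
    have e₂ : wordProd c (i + 2) • z0 = wordProd c (i + 1) • (c (i + 1) • z0) := by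
      rw [smul_smul, ← wordProd_succ]
    rw [e₁, e₂, gp_smul]
    exact hturn i
  le_dist i _ := by
    rw [wordProd_succ, ← smul_smul, dist_smul]
    exact hlong i

lemma dist_wordProd_smul_le {c : ℕ → Γ} {J : ℝ} (h : ∀ s, dist z0 (c s • z0) ≤ J) (n : ℕ) :
    dist z0 (wordProd c n • z0) ≤ n * J := by
  induction n with
  | zero => simp
  | succ n ih =>
    rw [wordProd_succ, ← smul_smul]
    have := dist_triangle z0 (wordProd c n • z0) (wordProd c n • c n • z0)
    rw [dist_smul] at this
    push_cast
    linarith [h n]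

structure IsPingPong (δ K : ℝ) (z0 : X) (E : Bool → Γ) : Prop where
  gp_inv_le : ∀ p q, gp z0 ((E p)⁻¹ • z0) (E q • z0) ≤ K
  gp_le : ∀ p q, p ≠ q → gp z0 (E p • z0) (E q • z0) ≤ K
  gp_inv_inv_le : ∀ p q, p ≠ q → gp z0 ((E p)⁻¹ • z0) ((E q)⁻¹ • z0) ≤ K
  le_dist : ∀ p, 2 * K + 4 * δ + 1 ≤ dist z0 (E p • z0)

namespace IsPingPong

variable {E : Bool → Γ}

lemma inv (h : IsPingPong δ K z0 E) : IsPingPong δ K z0 fun p => (E p)⁻¹ where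
  gp_inv_le p q := by simpa only [inv_inv, gp_comm] using h.gp_inv_le q p
  gp_le := h.gp_inv_inv_le
  gp_inv_inv_le p q hpq := by simpa only [inv_inv] using h.gp_le p q hpq
  le_dist p := by simpa only [dist_inv_smul_self] using h.le_dist p

lemma isChain (h : IsPingPong δ K z0 E) (β : ℕ → Bool) (k : ℕ) :
    IsChain δ K (fun i => wordProd (E ∘ β) i • z0) k :=
  isChain_wordProd (fun _ => h.gp_inv_le _ _) (fun _ => h.le_dist _) k

variable (hyp : HypWith δ X) (hδ : 0 ≤ δ) (hK : 0 ≤ K)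
include hyp hδ hK

lemma gp_wordProd_le_of_head_ne (h : IsPingPong δ K z0 E) {β γ : ℕ → Bool} (h₀ : β 0 ≠ γ 0)
    {k l : ℕ} (hk : 1 ≤ k) (hl : 1 ≤ l) :
    gp z0 (wordProd (E ∘ β) k • z0) (wordProd (E ∘ γ) l • z0) ≤ K + 2 * δ := by
  simpa using (h.isChain β k).gp_ends_le_of_fork (h.isChain γ l) hyp hδ hK hk hl (by simp)
    (by simpa [wordProd_succ] using h.gp_le _ _ h₀)

lemma gp_wordProd_le (h : IsPingPong δ K z0 E) {J : ℝ} (hJ : ∀ p, dist z0 (E p • z0) ≤ J)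
    {β γ : ℕ → Bool} {r m : ℕ} (hrm : r < m) (hagree : ∀ s < r, β s = γ s) (hne : β r ≠ γ r) :
    gp z0 (wordProd (E ∘ β) m • z0) (wordProd (E ∘ γ) m • z0) ≤ r * J + (K + 2 * δ) := by
  obtain ⟨n, rfl⟩ := Nat.exists_eq_add_of_lt hrm
  have hprefix : wordProd (E ∘ γ) r = wordProd (E ∘ β) r :=
    wordProd_congr fun s hs => by simp [hagree s hs]
  rw [add_assoc, wordProd_add (E ∘ β) r, wordProd_add (E ∘ γ) r, hprefix, ← smul_smul,
    ← smul_smul]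
  refine (gp_le_dist_add_gp z0 (wordProd (E ∘ β) r • z0) _ _).trans ?_
  rw [gp_smul]
  exact add_le_add (dist_wordProd_smul_le (fun _ => hJ _) r)
    (h.gp_wordProd_le_of_head_ne (β := fun s => β (r + s)) (γ := fun s => γ (r + s)) hyp hδ hK
      (by simpa using hne) (by omega) (by omega))

end IsPingPong

end WordChain

section Schottky

variable {X : Type*} [MetricSpace X] {Γ : Type*} [Group Γ] [MulAction Γ X]
  [IsIsometricSMul Γ X] {δ : ℝ} {z0 : X}

/-- Ping-pong counting: for given `y, z`, at most one `W t` has `z` far out in the direction of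
`(W t)⁻¹`, and at most one other `W t` maps `z` far out in the direction of `y`. -/
lemma isSchottky_range {ι : Type*} [Finite ι] (hι : 6 ≤ Nat.card ι) (hyp : HypWith δ X)
    (hδ : 0 ≤ δ) {D : ℝ} (hD : 0 ≤ D) {W : ι → Γ}
    (hfwd : Pairwise fun t u => gp z0 (W t • z0) (W u • z0) ≤ D)
    (hbwd : Pairwise fun t u => gp z0 ((W t)⁻¹ • z0) ((W u)⁻¹ • z0) ≤ D)
    (hlong : ∀ t, 2 * D + 3 * δ + 2 ≤ dist z0 (W t • z0)) :
    IsSchottky z0 (Set.range W) := by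
  have hinj : Function.Injective W := by
    intro t u htu
    by_contra hne
    have : gp z0 (W t • z0) (W u • z0) ≤ D := hfwd hne
    rw [htu, gp_self] at this
    linarith [hlong u]
  have : Nonempty ι := Nat.card_pos_iff.1 (by omega) |>.1
  refine ⟨Set.finite_range W, Set.range_nonempty W, D + 3 * δ + 1, by linarith, fun y z => ?_⟩
  set bad := {t | D + 3 * δ + 1 < gp z0 y (W t • z)}
  set far := {t | D + δ + 1 < gp z0 z ((W t)⁻¹ • z0)}
  have hfar : far.Subsingleton := by
    intro t (ht : D + δ + 1 < _) u (hu : D + δ + 1 < _)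
    by_contra hne
    have := hyp.min_sub_le z0 ((W t)⁻¹ • z0) z ((W u)⁻¹ • z0)
    rw [gp_comm z0 _ z] at this
    linarith [lt_min ht hu, hbwd hne]
  have hnear : (bad \ far).Subsingleton := by
    intro t ⟨(ht : D + 3 * δ + 1 < _), ht'⟩ u ⟨(hu : D + 3 * δ + 1 < _), hu'⟩
    by_contra hne
    have hret : ∀ v ∉ far, D + 2 * δ + 1 ≤ gp z0 (W v • z) (W v • z0) := fun v hv => by
      rw [gp_smul_smul_self]; linarith [hlong v, not_lt.1 (show ¬ D + δ + 1 < _ from hv)]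
    have h₁ := hyp.min_sub_le z0 (W t • z) y (W u • z)
    have h₂ := hyp.min_sub_le z0 (W t • z0) (W t • z) (W u • z)
    have h₃ := hyp.min_sub_le z0 (W t • z0) (W u • z) (W u • z0)
    rw [gp_comm z0 _ y] at h₁
    rw [gp_comm z0 _ (W t • z)] at h₂
    have hq₁ : D + 2 * δ + 1 ≤ gp z0 (W t • z) (W u • z) := by linarith [lt_min ht hu]
    have hq₂ : D + δ + 1 ≤ gp z0 (W t • z0) (W u • z) := by
      linarith [le_min (hret t ht') hq₁]
    have hq₃ : D + 1 ≤ gp z0 (W t • z0) (W u • z0) := by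
      have := hret u hu'
      linarith [le_min hq₂ (show D + δ + 1 ≤ gp z0 (W u • z) (W u • z0) by linarith)]
    linarith [show gp z0 (W t • z0) (W u • z0) ≤ D from hfwd hne]
  have hbad : bad.ncard ≤ 2 :=
    calc bad.ncard ≤ (far ∪ bad \ far).ncard :=
          Set.ncard_le_ncard (by rw [Set.union_sdiff_self]; exact Set.subset_union_right)
      _ ≤ far.ncard + (bad \ far).ncard := Set.ncard_union_le _ _
      _ ≤ 1 + 1 := add_le_add (Set.ncard_le_one_iff_subsingleton.2 hfar)
          (Set.ncard_le_one_iff_subsingleton.2 hnear)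
  have hgood : {s ∈ Set.range W | gp z0 y (s • z) ≤ D + 3 * δ + 1} = W '' badᶜ := by
    ext s
    constructor
    · rintro ⟨⟨t, rfl⟩, hs⟩; exact ⟨t, not_lt.2 hs, rfl⟩
    · rintro ⟨t, ht, rfl⟩; exact ⟨⟨t, rfl⟩, not_lt.1 ht⟩
  have hcompl := Set.ncard_add_ncard_compl bad
  rw [Set.ncard_range_of_injective hinj, hgood, Set.ncard_image_of_injective _ hinj]
  have : 2 * Nat.card ι ≤ 3 * badᶜ.ncard := by omega
  have : (2 : ℝ) * Nat.card ι ≤ 3 * badᶜ.ncard := by exact_mod_cast this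
  linarith

/-- The bits of a palindrome of length `m` that begins, and hence ends, with the bits of `t`. -/
def mirrorBits {ℓ : ℕ} (m : ℕ) (t : Fin ℓ → Bool) (s : ℕ) : Bool :=
  if h : min s (m - 1 - s) < ℓ then t ⟨_, h⟩ else true

lemma mirrorBits_of_lt {ℓ m s : ℕ} (t : Fin ℓ → Bool) (hm : 2 * ℓ ≤ m) (hs : s < ℓ) :
    mirrorBits m t s = t ⟨s, hs⟩ := by
  have : min s (m - 1 - s) = s := min_eq_left (by omega)
  simp [mirrorBits, this, hs]

lemma mirrorBits_sub {ℓ m s : ℕ} (t : Fin ℓ → Bool) (hs : s < m) :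
    mirrorBits m t (m - 1 - s) = mirrorBits m t s := by
  have : min (m - 1 - s) (m - 1 - (m - 1 - s)) = min s (m - 1 - s) := by
    rw [min_comm]; congr 1; omega
  simp only [mirrorBits, this]

namespace IsPingPong

variable {K : ℝ} {E : Bool → Γ} (hyp : HypWith δ X) (hδ : 0 ≤ δ) (hK : 0 ≤ K)
include hyp hδ hK

lemma gp_wordProd_mirrorBits_le (h : IsPingPong δ K z0 E) {J : ℝ} (hJ₀ : 0 ≤ J)
    (hJ : ∀ p, dist z0 (E p • z0) ≤ J) {ℓ m : ℕ} (hm : 2 * ℓ ≤ m) {t u : Fin ℓ → Bool}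
    (htu : t ≠ u) :
    gp z0 (wordProd (E ∘ mirrorBits m t) m • z0) (wordProd (E ∘ mirrorBits m u) m • z0) ≤
      ℓ * J + (K + 2 * δ) := by
  obtain ⟨i, hi⟩ := Function.ne_iff.1 htu
  have hex : ∃ s, mirrorBits m t s ≠ mirrorBits m u s :=
    ⟨i, by rwa [mirrorBits_of_lt t hm i.2, mirrorBits_of_lt u hm i.2]⟩
  have hr : Nat.find hex < ℓ := (Nat.find_le (by
    rwa [mirrorBits_of_lt t hm i.2, mirrorBits_of_lt u hm i.2])).trans_lt i.2
  refine (h.gp_wordProd_le hyp hδ hK hJ (by omega) (fun s hs => not_not.1 (Nat.find_min hex hs))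
    (Nat.find_spec hex)).trans ?_
  gcongr

lemma exists_isSchottky_subset_pow (h : IsPingPong δ K z0 E) :
    ∃ m, 0 < m ∧ ∃ S ⊆ Set.range E ^ m, IsSchottky z0 S := by
  set J := max (dist z0 (E true • z0)) (dist z0 (E false • z0))
  have hJ (p : Bool) : dist z0 (E p • z0) ≤ J := by cases p <;> simp [J]
  have hJ₀ : 0 ≤ J := dist_nonneg.trans (hJ true)
  set D := 3 * J + (K + 2 * δ)
  set m := max 6 ⌈2 * D + 3 * δ + 2⌉₊
  have hm : 2 * D + 3 * δ + 2 ≤ m := (Nat.le_ceil _).trans (by exact_mod_cast le_max_right _ _)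
  have hm6 : 2 * 3 ≤ m := le_max_left _ _
  set W := fun t : Fin 3 → Bool => wordProd (E ∘ mirrorBits m t) m
  have hWinv (t : Fin 3 → Bool) : (W t)⁻¹ = wordProd ((fun p => (E p)⁻¹) ∘ mirrorBits m t) m := by
    rw [inv_wordProd]
    exact wordProd_congr fun s hs => by simp [mirrorBits_sub t hs]
  have hD : ((3 : ℕ) : ℝ) * J + (K + 2 * δ) = D := by norm_num [D]
  refine ⟨m, by omega, Set.range W, ?_, isSchottky_range (D := D) (by simp) hyp hδ (by positivity)
    (fun t u htu => hD ▸ h.gp_wordProd_mirrorBits_le hyp hδ hK hJ₀ hJ hm6 htu)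
    (fun t u htu => by
      simpa only [hWinv, hD] using h.inv.gp_wordProd_mirrorBits_le hyp hδ hK hJ₀
        (by simpa only [dist_inv_smul_self] using hJ) hm6 htu)
    (fun t => ?_)⟩
  · rintro _ ⟨t, rfl⟩
    exact wordProd_mem_pow (fun s => Set.mem_range_self _) m
  · have := (h.isChain (mirrorBits m t) m).mul_le_dist hyp hδ hK
    simp only [wordProd_zero, one_smul] at this
    show _ ≤ dist z0 (wordProd (E ∘ mirrorBits m t) m • z0)
    nlinarith [Nat.cast_nonneg (α := ℝ) m]

end IsPingPong

end Schottky

lemma exists_pow_of_mem_closure {Γ : Type*} [Monoid Γ] {B : Set Γ} {a : Γ}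
    (h : a ∈ Subsemigroup.closure B) : ∃ k, 0 < k ∧ a ∈ B ^ k := by
  let T : Subsemigroup Γ :=
    { carrier := {x | ∃ k, 0 < k ∧ x ∈ B ^ k}
      mul_mem' := by
        rintro x y ⟨k, hk, hx⟩ ⟨l, hl, hy⟩
        exact ⟨k + l, by omega, pow_add B k l ▸ Set.mul_mem_mul hx hy⟩ }
  exact Subsemigroup.closure_le.2 (show B ⊆ T from fun x hx => ⟨1, one_pos, by rwa [pow_one]⟩) h

section ConvolutionSupport

variable {Γ : Type*} [Monoid Γ] [Countable Γ] [MeasurableSpace Γ] [MeasurableSingletonClass Γ]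

lemma mul_mem_measSupport_mconv {μ ν : Measure Γ} [SFinite ν] {x y : Γ}
    (hx : x ∈ measSupport μ) (hy : y ∈ measSupport ν) : x * y ∈ measSupport (mconv μ ν) := by
  have hxy : ({x} : Set Γ) ×ˢ {y} ⊆ (fun p : Γ × Γ => p.1 * p.2) ⁻¹' {x * y} := by
    rintro ⟨_, _⟩ ⟨rfl, rfl⟩; rfl
  have := measure_mono (μ := μ.prod ν) hxy
  rw [Measure.prod_prod] at this
  simp only [measSupport, mconv, Set.mem_ofPred_eq,
    Measure.map_apply (measurable_of_countable _) (measurableSet_singleton _)]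
  exact (pos_iff_ne_zero.2 (mul_ne_zero hx hy)).trans_le this |>.ne'

lemma pow_subset_measSupport_convPow (μ : Measure Γ) [SFinite μ] (n : ℕ) :
    measSupport μ ^ n ⊆ measSupport (convPow μ n) := by
  induction n with
  | zero =>
    intro g hg
    rw [pow_zero, Set.mem_one] at hg
    subst hg
    simp [measSupport, convPow]
  | succ n ih =>
    rintro _ ⟨x, hx, y, hy, rfl⟩
    exact mul_mem_measSupport_mconv (ih hx) hy

end ConvolutionSupport

section AlignedRay

variable {X : Type*} [MetricSpace X] {δ : ℝ} {z0 : X}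

/-- Each `u j` is `C`-close to every geodesic from `z0` to a later point `u k`. -/
def IsAlignedRay (z0 : X) (C : ℝ) (u : ℕ → X) : Prop :=
  ∀ j k, j ≤ k → dist z0 (u j) - C ≤ gp z0 (u j) (u k)

lemma IsChain.isAlignedRay {K : ℝ} {x : ℕ → X} (h : ∀ k, IsChain δ K x k) (hyp : HypWith δ X)
    (hδ : 0 ≤ δ) (hK : 0 ≤ K) : IsAlignedRay (x 0) (K + 2 * δ) x :=
  fun _ k hjk => (h k).dist_sub_le_gp hyp hδ hK hjk

lemma IsAlignedRay.of_mul {C L : ℝ} {u : ℕ → X} {n : ℕ}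
    (h : IsAlignedRay z0 C fun i => u (n * i)) (hL : ∀ i, dist (u (n * (i / n))) (u i) ≤ L) :
    IsAlignedRay z0 (C + 3 * L) u := by
  intro j k hjk
  have h₁ := gp_le_gp_add_dist z0 (u (n * (j / n))) (u j) (u k)
  have h₂ := gp_le_gp_add_dist z0 (u (n * (k / n))) (u k) (u (n * (j / n)))
  have h₃ := dist_triangle z0 (u (n * (j / n))) (u j)
  rw [gp_comm z0 (u (n * (k / n))), gp_comm z0 (u k)] at h₂
  linarith [h (j / n) (k / n) (Nat.div_le_div_right hjk), hL j, hL k]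

lemma exists_frequently_gp_le_of_not_sameEnd {u v : ℕ → X} (h : ¬ SameEnd z0 u v) :
    ∃ M, ∃ᶠ n in atTop, gp z0 (u n) (v n) ≤ M := by
  simp only [SameEnd, tendsto_atTop, not_forall, not_eventually, not_le] at h
  obtain ⟨M, hM⟩ := h
  exact ⟨M, hM.mono fun _ => le_of_lt⟩

lemma SameEnd.symm {u v : ℕ → X} (h : SameEnd z0 u v) : SameEnd z0 v u := by
  simpa only [SameEnd, gp_comm z0 (v _)] using h

lemma exists_gp_le_of_not_sameEnd (hyp : HypWith δ X) {u v : ℕ → X} {C C' : ℝ}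
    (hu : IsAlignedRay z0 C u) (hv : IsAlignedRay z0 C' v)
    (hu' : Tendsto (fun n => dist z0 (u n)) atTop atTop)
    (hv' : Tendsto (fun n => dist z0 (v n)) atTop atTop) (h : ¬ SameEnd z0 u v) :
    ∃ M N, ∀ j k, N ≤ j → N ≤ k → gp z0 (u j) (v k) ≤ M := by
  obtain ⟨M, hM⟩ := exists_frequently_gp_le_of_not_sameEnd h
  obtain ⟨n, hn, hvn, hun⟩ := (hM.and_eventually ((hv'.eventually_gt_atTop (M + C' + δ)).and
    (hu'.eventually_gt_atTop (M + C + 2 * δ)))).exists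
  refine ⟨M + 2 * δ, n, fun j k hj hk => ?_⟩
  have h₁ : gp z0 (u n) (v k) ≤ M + δ := hyp.gp_le_of_gp_le hn (by linarith [hv n k hk])
  rw [gp_comm] at h₁ ⊢
  have := hyp.gp_le_of_gp_le (z := u j) h₁ (by linarith [hu n j hj])
  linarith

lemma exists_gp_le_of_pairwise_not_sameEnd (hyp : HypWith δ X) {ι : Type*} [Finite ι]
    {u : ι → ℕ → X} {C : ι → ℝ} (hu : ∀ i, IsAlignedRay z0 (C i) (u i))
    (hu' : ∀ i, Tendsto (fun n => dist z0 (u i n)) atTop atTop)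
    (h : Pairwise fun i i' => ¬ SameEnd z0 (u i) (u i')) :
    ∃ M N, ∀ i i', i ≠ i' → ∀ j k, N ≤ j → N ≤ k → gp z0 (u i j) (u i' k) ≤ M := by
  have (p : ι × ι) : ∃ M N, p.1 ≠ p.2 → ∀ j k, N ≤ j → N ≤ k → gp z0 (u p.1 j) (u p.2 k) ≤ M := by
    by_cases hp : p.1 = p.2
    · exact ⟨0, 0, fun h => (h hp).elim⟩
    · obtain ⟨M, N, hMN⟩ :=
        exists_gp_le_of_not_sameEnd hyp (hu p.1) (hu p.2) (hu' p.1) (hu' p.2) (h hp)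
      exact ⟨M, N, fun _ => hMN⟩
  choose M N hMN using this
  obtain ⟨M₀, hM₀⟩ := Finite.exists_le M
  obtain ⟨N₀, hN₀⟩ := Finite.exists_le N
  exact ⟨M₀, N₀, fun i i' hii' j k hj hk =>
    (hMN (i, i') hii' j k ((hN₀ _).trans hj) ((hN₀ _).trans hk)).trans (hM₀ _)⟩

end AlignedRay

section Loxodromic

variable {X : Type*} [MetricSpace X] {Γ : Type*} [Group Γ] [MulAction Γ X] {δ : ℝ} {z0 : X}

lemma raySeq_true (g : Γ) : raySeq z0 g true = fun n => g ^ n • z0 := by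
  ext n; simp [raySeq]

lemma raySeq_false (g : Γ) : raySeq z0 g false = fun n => (g ^ n)⁻¹ • z0 := by
  ext n; simp [raySeq]

variable [IsIsometricSMul Γ X]

lemma dist_pow_smul_le (g : Γ) (z0 : X) (k : ℕ) :
    dist z0 (g ^ k • z0) ≤ k * dist z0 (g • z0) := by
  simpa only [wordProd_const] using dist_wordProd_smul_le (c := fun _ => g) (fun _ => le_rfl) k

lemma IsLoxodromic.tendsto_dist_pow_smul {g : Γ} (hg : IsLoxodromic X g) (z0 : X) :
    Tendsto (fun n : ℕ => dist z0 (g ^ n • z0)) atTop atTop := by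
  obtain ⟨x, lam, C, hlam, -, hQ⟩ := hg
  refine tendsto_atTop_mono (fun n => ?_) <| tendsto_atTop_add_const_right _ (-(C + 2 * dist x z0))
    ((tendsto_natCast_atTop_atTop (R := ℝ)).const_mul_atTop (inv_pos.2 (by linarith)))
  have hn := (hQ n 0).1
  simp only [zpow_natCast, zpow_zero, one_smul, Int.cast_natCast, Int.cast_zero, sub_zero,
    Nat.abs_cast] at hn
  have := dist_triangle4 x z0 (g ^ n • z0) (g ^ n • x)
  rw [dist_smul, dist_comm z0 x] at this
  rw [dist_comm] at hn
  linarith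

lemma isAlignedRay_pow (hyp : HypWith δ X) (hδ : 0 ≤ δ) {g : Γ}
    (hdiv : Tendsto (fun n : ℕ => dist z0 (g ^ n • z0)) atTop atTop)
    (hend : ¬ SameEnd z0 (fun n => g ^ n • z0) (fun n => (g ^ n)⁻¹ • z0)) :
    ∃ C, IsAlignedRay z0 C fun n => g ^ n • z0 := by
  obtain ⟨M, hM⟩ := exists_frequently_gp_le_of_not_sameEnd hend
  obtain ⟨n, hturn, hn, hlong⟩ := (hM.and_eventually ((eventually_gt_atTop 0).and
    (hdiv.eventually_ge_atTop (2 * max M 0 + 4 * δ + 1)))).exists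
  have hchain (k : ℕ) : IsChain δ (max M 0) (fun i => g ^ (n * i) • z0) k := by
    simpa only [wordProd_const, pow_mul] using isChain_wordProd (c := fun _ => g ^ n)
      (fun _ => by rw [gp_comm]; exact hturn.trans (le_max_left _ _)) (fun _ => hlong) k
  have hL (i : ℕ) : dist (g ^ (n * (i / n)) • z0) (g ^ i • z0) ≤ n * dist z0 (g • z0) := by
    have e : g ^ i = g ^ (n * (i / n)) * g ^ (i % n) := by rw [← pow_add, Nat.div_add_mod]
    rw [e, ← smul_smul, dist_smul]
    exact (dist_pow_smul_le g z0 _).trans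
      (mul_le_mul_of_nonneg_right (by exact_mod_cast (Nat.mod_lt i hn).le) dist_nonneg)
  have := (IsChain.isAlignedRay hchain hyp hδ (le_max_right _ _))
  simp only [mul_zero, pow_zero, one_smul] at this
  exact ⟨_, this.of_mul hL⟩

lemma IsLoxodromic.isAlignedRay_raySeq (hyp : HypWith δ X) (hδ : 0 ≤ δ) {g : Γ}
    (hg : IsLoxodromic X g) (hend : ¬ SameEnd z0 (raySeq z0 g true) (raySeq z0 g false))
    (s : Bool) :
    (∃ C, IsAlignedRay z0 C (raySeq z0 g s)) ∧
      Tendsto (fun n => dist z0 (raySeq z0 g s n)) atTop atTop := by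
  rw [raySeq_true, raySeq_false] at hend
  have hdiv := hg.tendsto_dist_pow_smul z0
  cases s
  · have hdiv' : Tendsto (fun n : ℕ => dist z0 (g⁻¹ ^ n • z0)) atTop atTop := by
      simpa only [inv_pow, dist_inv_smul_self] using hdiv
    rw [raySeq_false]
    simp_rw [← inv_pow]
    refine ⟨isAlignedRay_pow hyp hδ hdiv' fun h => hend ?_, hdiv'⟩
    simpa only [inv_pow, inv_inv] using h.symm
  · rw [raySeq_true]
    exact ⟨isAlignedRay_pow hyp hδ hdiv hend, hdiv⟩

end Loxodromic

section PingPong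

variable {X : Type*} [MetricSpace X] {Γ : Type*} [Group Γ] [MulAction Γ X] {δ : ℝ} {z0 : X}

lemma IndepLox.pairwise_not_sameEnd {a b : Γ} (h : IndepLox z0 a b) :
    Pairwise fun i i' : Bool × Bool =>
      ¬ SameEnd z0 (raySeq z0 (cond i.1 a b) i.2) (raySeq z0 (cond i'.1 a b) i'.2) := by
  obtain ⟨-, -, ha, hb, hab⟩ := h
  rintro ⟨p, s⟩ ⟨p', s'⟩ hne
  cases p <;> cases p' <;> simp only [cond_true, cond_false]
  · cases s <;> cases s' <;> first | exact (hne rfl).elim | exact hb | exact fun h' => hb h'.symm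
  · exact fun h' => hab s' s h'.symm
  · exact hab s s'
  · cases s <;> cases s' <;> first | exact (hne rfl).elim | exact ha | exact fun h' => ha h'.symm

variable [IsIsometricSMul Γ X]

lemma IndepLox.exists_isPingPong_pow (hyp : HypWith δ X) (hδ : 0 ≤ δ) {a b : Γ}
    (hab : IndepLox z0 a b) (e : Bool → ℕ) (he : ∀ p, 0 < e p) :
    ∃ K n, 0 ≤ K ∧ 0 < n ∧ IsPingPong δ K z0 fun p => cond p a b ^ (e p * n) := by
  set u := fun i : Bool × Bool => raySeq z0 (cond i.1 a b) i.2
  have hend := hab.pairwise_not_sameEnd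
  have hlox (p : Bool) : IsLoxodromic X (cond p a b) := by cases p; exacts [hab.2.1, hab.1]
  have hray (i : Bool × Bool) := (hlox i.1).isAlignedRay_raySeq hyp hδ
    (hend (i := (i.1, true)) (j := (i.1, false)) (by simp)) i.2
  choose C hC using fun i => (hray i).1
  obtain ⟨M, N, hMN⟩ := exists_gp_le_of_pairwise_not_sameEnd hyp hC (fun i => (hray i).2) hend
  obtain ⟨N', hN'⟩ := eventually_atTop.1 <| eventually_all.2 fun i =>
    (hray i).2.eventually_ge_atTop (2 * max M 0 + 4 * δ + 1)
  set n := max (max N N') 1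
  have hexp (p : Bool) : N ≤ e p * n ∧ N' ≤ e p * n := by
    have := Nat.le_mul_of_pos_left n (he p); omega
  have hfwd (p : Bool) : cond p a b ^ (e p * n) • z0 = u (p, true) (e p * n) := by
    simp [u, raySeq_true]
  have hbwd (p : Bool) : (cond p a b ^ (e p * n))⁻¹ • z0 = u (p, false) (e p * n) := by
    simp [u, raySeq_false]
  have hgp (i i' : Bool × Bool) (hii' : i ≠ i') :
      gp z0 (u i (e i.1 * n)) (u i' (e i'.1 * n)) ≤ max M 0 :=
    (hMN i i' hii' _ _ (hexp _).1 (hexp _).1).trans (le_max_left _ _)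
  refine ⟨max M 0, n, le_max_right _ _, by omega, ⟨fun p q => ?_, fun p q hpq => ?_,
    fun p q hpq => ?_, fun p => ?_⟩⟩
  · simpa only [hfwd, hbwd] using hgp (p, false) (q, true) (by simp)
  · simpa only [hfwd] using hgp (p, true) (q, true) (by simpa using hpq)
  · simpa only [hbwd] using hgp (p, false) (q, false) (by simpa using hpq)
  · simpa only [hfwd] using hN' _ (hexp p).2 (p, true)

end PingPong

theorem exists_schottky_in_convolution_support_general
    {X : Type*} [MetricSpace X] {Γ : Type*} [Group Γ] [Countable Γ]
    [MeasurableSpace Γ] [MeasurableSingletonClass Γ] [MulAction Γ X]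
    (hiso : IsIsomAction Γ X) (hhyp : GromovHyperbolic X)
    (z0 : X) (μ : Measure Γ) [IsProbabilityMeasure μ]
    (hne : NonElementary z0 μ) :
    ∃ p : ℕ, 0 < p ∧ ∃ S : Set Γ, S ⊆ measSupport (convPow μ p) ∧ IsSchottky z0 S := by
  have : IsIsometricSMul Γ X := ⟨fun g => Isometry.of_dist_eq (hiso g)⟩
  obtain ⟨δ, hδ, hyp⟩ := hhyp
  obtain ⟨a, b, ha, hb, hab⟩ := hne
  obtain ⟨α, hα, haS⟩ := exists_pow_of_mem_closure ha
  obtain ⟨β, hβ, hbS⟩ := exists_pow_of_mem_closure hb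
  obtain ⟨K, n, hK, hn, hE⟩ :=
    hab.exists_isPingPong_pow hyp hδ.le (fun p => cond p β α) (by simp [hα, hβ])
  obtain ⟨m, hm, S, hSE, hS⟩ := hE.exists_isSchottky_subset_pow hyp hδ.le hK
  refine ⟨α * β * n * m, by positivity, S, subset_trans ?_ (pow_subset_measSupport_convPow μ _), hS⟩
  rw [pow_mul (measSupport μ) (α * β * n) m]
  refine hSE.trans (Set.pow_subset_pow_left ?_)
  rintro _ ⟨_ | _, rfl⟩
  · have := Set.pow_mem_pow hbS (n := α * n)
    rwa [← pow_mul, show β * (α * n) = α * β * n by ring] at this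
  · have := Set.pow_mem_pow haS (n := β * n)
    rwa [← pow_mul, ← mul_assoc] at this

/-- **Proposition (existence of Schottky sets).** If `μ` is a non-elementary probability
measure on a group `Γ` acting by isometries on a geodesic Gromov-hyperbolic space, then
for some `p` the support of `μ^{*p}` contains a Schottky set. -/
theorem exists_schottky_in_convolution_support
    {X : Type*} [MetricSpace X] {Γ : Type*} [Group Γ] [Countable Γ]
    [MeasurableSpace Γ] [MeasurableSingletonClass Γ] [MulAction Γ X]
    (hiso : IsIsomAction Γ X) (hgeo : GeodesicSpace X) (hhyp : GromovHyperbolic X)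
    (z0 : X) (μ : Measure Γ) [IsProbabilityMeasure μ]
    (hne : NonElementary z0 μ) :
    ∃ p : ℕ, 0 < p ∧ ∃ S : Set Γ, S ⊆ measSupport (convPow μ p) ∧ IsSchottky z0 S :=
  exists_schottky_in_convolution_support_general hiso hhyp z0 μ hne

end BMS
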